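/- arXiv:2402.08274 — 4 statements merged into one kernel-verified Lean document; each statement's English description precedes it below -/
import Mathlib

section
/- Let p be a prime and t ≥ 2. If C1, C2 ⊆ F_p^t satisfy ⟨v1, v2⟩ ≠ 0 for all v1 ∈ C1 and v2 ∈ C2, then |C1|·|C2| ≤ p^{t+2}. -/
/-!
Let `q = |F|`, `n = |ι|`, and `δ a = q·[a = 0] - 1`, the indicator of `0` made mean-zero.
Put `S x = ∑_{w ∈ C₂} δ (x ⬝ w)`. On `C₁` every term is `-1`, so `|C₁| |C₂|² ≤ ∑_x (S x)²`, and
expanding the square gives `∑_{v, w ∈ C₂} ∑_x δ (x ⬝ v) δ (x ⬝ w)`. If `v, w` are independent then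
`x ↦ (x ⬝ v, x ⬝ w)` is surjective, all its fibres have the same size, and the inner sum factors
through `(∑_a δ a)² = 0`; if `w` is a nonzero multiple of `v` it is `(q - 1) qⁿ`. A line meets `C₂`
in at most `q` points, so `∑_x (S x)² ≤ |C₂| q^(n+2)`. This is the expander mixing lemma for the
orthogonality graph, run on `q A - J` with `A` its adjacency matrix.
-/

def ip {F : Type*} [CommRing F] {ι : Type*} [Fintype ι] (x y : ι → F) : F :=
  ∑ i, x i * y i

open Finset Matrix

theorem AddMonoidHom.sum_comp_of_surjective {G M R : Type*} [AddGroup G] [Fintype G]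
    [AddMonoid M] [Fintype M] [DecidableEq M] [AddCommMonoid R] (L : G →+ M)
    (hL : Function.Surjective L) (g : M → R) :
    ∑ x, g (L x) = #{x | L x = 0} • ∑ y, g y := by
  rw [← sum_fiberwise' univ L g, smul_sum]
  refine sum_congr rfl fun y _ => ?_
  rw [sum_const, AddMonoidHom.card_fiber_eq_of_mem_range L (hL y) (hL 0)]

theorem Matrix.mulVec_surjective_of_linearIndependent_row {F ι m : Type*} [Field F]
    [Fintype ι] [Fintype m] {M : Matrix m ι F} (hM : LinearIndependent F M.row) :
    Function.Surjective M.mulVec := by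
  have hrange : LinearMap.range M.mulVecLin = ⊤ := Submodule.eq_top_of_finrank_eq <| by
    rw [Module.finrank_fintype_fun_eq_card, ← hM.rank_matrix]; rfl
  exact LinearMap.range_eq_top.mp hrange

variable {F ι : Type*} [Field F] [Fintype F] [DecidableEq F] [Fintype ι]

local notation "q" => (Fintype.card F : ℤ)

theorem card_filter_mem_span_singleton_le (C : Finset (ι → F)) (v : ι → F)
    [DecidablePred (· ∈ F ∙ v)] : #{w ∈ C | w ∈ F ∙ v} ≤ Fintype.card F :=
  calc #{w ∈ C | w ∈ F ∙ v} ≤ #(univ.image (· • v)) := by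
        refine card_le_card fun w hw => ?_
        obtain ⟨c, rfl⟩ := Submodule.mem_span_singleton.mp (mem_filter.mp hw).2
        exact mem_image_of_mem _ (mem_univ c)
    _ ≤ Fintype.card F := card_image_le

variable [DecidableEq ι]

theorem sum_prod_comp_dotProduct_eq_zero {R m : Type*} [CommRing R] [Fintype m] [Nonempty m]
    {u : m → ι → F} (hu : LinearIndependent F u) {f : F → R} (hf : ∑ a, f a = 0) :
    ∑ x : ι → F, ∏ i, f (x ⬝ᵥ u i) = 0 := by
  classical
  let L : (ι → F) →+ (m → F) := (Matrix.of u).mulVecLin.toAddMonoidHom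
  have hL : Function.Surjective L := mulVec_surjective_of_linearIndependent_row hu
  have hLx (x : ι → F) (i : m) : L x i = x ⬝ᵥ u i := dotProduct_comm _ _
  simp_rw [← hLx]
  rw [L.sum_comp_of_surjective hL (fun y => ∏ i, f (y i)), ← Fintype.prod_sum,
    prod_eq_zero (mem_univ (Classical.arbitrary m)) hf, smul_zero]

variable (F) in
def centeredDelta (a : F) : ℤ :=
  if a = 0 then Fintype.card F - 1 else -1

theorem sum_centeredDelta : ∑ a, centeredDelta F a = 0 := by
  have h (a : F) : centeredDelta F a = q * (if a = 0 then 1 else 0) - 1 := by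
    unfold centeredDelta; split_ifs <;> ring
  simp [h, sum_sub_distrib]

theorem centeredDelta_of_ne_zero {a : F} (ha : a ≠ 0) : centeredDelta F a = -1 := if_neg ha

theorem centeredDelta_mul_left {c : F} (hc : c ≠ 0) (a : F) :
    centeredDelta F (c * a) = centeredDelta F a := by
  simp only [centeredDelta, mul_eq_zero, hc, false_or]

theorem centeredDelta_sq (a : F) :
    centeredDelta F a ^ 2 = (q - 2) * centeredDelta F a + (q - 1) := by
  unfold centeredDelta; split_ifs <;> ring

theorem sum_centeredDelta_dotProduct {v : ι → F} (hv : v ≠ 0) :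
    ∑ x : ι → F, centeredDelta F (x ⬝ᵥ v) = 0 := by
  simpa using sum_prod_comp_dotProduct_eq_zero (m := Unit) (u := fun _ => v)
    (linearIndependent_unique_iff.mpr hv) sum_centeredDelta

theorem sum_centeredDelta_dotProduct_sq {v : ι → F} (hv : v ≠ 0) :
    ∑ x : ι → F, centeredDelta F (x ⬝ᵥ v) ^ 2 = (q - 1) * q ^ Fintype.card ι := by
  simp only [centeredDelta_sq, sum_add_distrib, ← mul_sum, sum_centeredDelta_dotProduct hv,
    sum_const, card_univ, Fintype.card_fun, nsmul_eq_mul]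
  push_cast
  ring

theorem sum_centeredDelta_dotProduct_mul_of_mem_span {v w : ι → F} (hv : v ≠ 0) (hw : w ≠ 0)
    (hvw : w ∈ F ∙ v) :
    ∑ x : ι → F, centeredDelta F (x ⬝ᵥ v) * centeredDelta F (x ⬝ᵥ w) =
      (q - 1) * q ^ Fintype.card ι := by
  obtain ⟨c, rfl⟩ := Submodule.mem_span_singleton.mp hvw
  have hc : c ≠ 0 := by rintro rfl; simp at hw
  simp_rw [dotProduct_smul, smul_eq_mul, centeredDelta_mul_left hc, ← sq]
  exact sum_centeredDelta_dotProduct_sq hv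

theorem sum_centeredDelta_dotProduct_mul_of_notMem_span {v w : ι → F} (hv : v ≠ 0)
    (hvw : w ∉ F ∙ v) :
    ∑ x : ι → F, centeredDelta F (x ⬝ᵥ v) * centeredDelta F (x ⬝ᵥ w) = 0 := by
  have hu : LinearIndependent F ![w, v] := linearIndependent_fin2.mpr
    ⟨hv, fun a h => hvw (Submodule.mem_span_singleton.mpr ⟨a, h⟩)⟩
  simpa [mul_comm] using sum_prod_comp_dotProduct_eq_zero hu sum_centeredDelta

theorem sum_sum_centeredDelta_dotProduct_mul_le {v : ι → F} (hv : v ≠ 0) (C : Finset (ι → F))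
    (hC : ∀ w ∈ C, w ≠ 0) :
    ∑ w ∈ C, ∑ x : ι → F, centeredDelta F (x ⬝ᵥ v) * centeredDelta F (x ⬝ᵥ w) ≤
      q * ((q - 1) * q ^ Fintype.card ι) := by
  classical
  rw [← sum_filter_add_sum_filter_not C (· ∈ F ∙ v),
    sum_congr rfl fun w hw => sum_centeredDelta_dotProduct_mul_of_mem_span hv
      (hC w (mem_filter.mp hw).1) (mem_filter.mp hw).2,
    sum_congr rfl fun w hw => sum_centeredDelta_dotProduct_mul_of_notMem_span hv
      (mem_filter.mp hw).2]
  simp only [sum_const, nsmul_eq_mul, mul_zero, add_zero]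
  have hq : (1 : ℤ) ≤ q := by exact_mod_cast Fintype.card_pos
  exact mul_le_mul_of_nonneg_right (by exact_mod_cast card_filter_mem_span_singleton_le C v)
    (mul_nonneg (sub_nonneg.mpr hq) (by positivity))

theorem sum_sq_sum_centeredDelta_dotProduct_le (C : Finset (ι → F)) (hC : ∀ w ∈ C, w ≠ 0) :
    ∑ x : ι → F, (∑ w ∈ C, centeredDelta F (x ⬝ᵥ w)) ^ 2 ≤
      #C * (q * ((q - 1) * q ^ Fintype.card ι)) :=
  calc ∑ x : ι → F, (∑ w ∈ C, centeredDelta F (x ⬝ᵥ w)) ^ 2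
      = ∑ v ∈ C, ∑ w ∈ C, ∑ x : ι → F,
          centeredDelta F (x ⬝ᵥ v) * centeredDelta F (x ⬝ᵥ w) := by
        simp only [sq, sum_mul_sum]
        rw [sum_comm]
        exact sum_congr rfl fun v _ => sum_comm
    _ ≤ ∑ v ∈ C, q * ((q - 1) * q ^ Fintype.card ι) :=
        sum_le_sum fun v hv => sum_sum_centeredDelta_dotProduct_mul_le (hC v hv) C hC
    _ = #C * (q * ((q - 1) * q ^ Fintype.card ι)) := by rw [sum_const, nsmul_eq_mul]

theorem card_mul_card_le_of_dotProduct_ne_zero (C₁ C₂ : Finset (ι → F))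
    (h : ∀ v₁ ∈ C₁, ∀ v₂ ∈ C₂, v₁ ⬝ᵥ v₂ ≠ 0) :
    #C₁ * #C₂ ≤ Fintype.card F ^ (Fintype.card ι + 2) := by
  obtain rfl | ⟨u, hu⟩ := C₁.eq_empty_or_nonempty
  · simp
  obtain rfl | hC₂ := C₂.eq_empty_or_nonempty
  · simp
  have hC₂0 : ∀ w ∈ C₂, w ≠ 0 := fun w hw hw0 => h u hu w hw (by simp [hw0])
  have hS (x) (hx : x ∈ C₁) : ∑ w ∈ C₂, centeredDelta F (x ⬝ᵥ w) = -#C₂ := by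
    simp [sum_congr rfl fun w hw => centeredDelta_of_ne_zero (h x hx w hw)]
  have hq : (1 : ℤ) ≤ q := by exact_mod_cast Fintype.card_pos
  have key : ((#C₁ * #C₂ : ℕ) : ℤ) * #C₂ ≤ q ^ (Fintype.card ι + 2) * #C₂ :=
    calc ((#C₁ * #C₂ : ℕ) : ℤ) * #C₂ = ∑ x ∈ C₁, (∑ w ∈ C₂, centeredDelta F (x ⬝ᵥ w)) ^ 2 := by
          rw [sum_congr rfl fun x hx => by rw [hS x hx]]; simp; ring
      _ ≤ ∑ x, (∑ w ∈ C₂, centeredDelta F (x ⬝ᵥ w)) ^ 2 :=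
          sum_le_univ_sum_of_nonneg fun x => sq_nonneg _
      _ ≤ #C₂ * (q * ((q - 1) * q ^ Fintype.card ι)) :=
          sum_sq_sum_centeredDelta_dotProduct_le C₂ hC₂0
      _ ≤ #C₂ * (q * (q * q ^ Fintype.card ι)) := by gcongr; linarith
      _ = q ^ (Fintype.card ι + 2) * #C₂ := by ring
  exact_mod_cast le_of_mul_le_mul_right key (by exact_mod_cast hC₂.card_pos)

theorem card_mul_card_le_general {p t : ℕ} (hp : p.Prime)
    (C1 C2 : Finset (Fin t → ZMod p))
    (h : ∀ v1 ∈ C1, ∀ v2 ∈ C2, ip v1 v2 ≠ 0) :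
    C1.card * C2.card ≤ p ^ (t + 2) := by
  have : Fact p.Prime := ⟨hp⟩
  simpa using card_mul_card_le_of_dotProduct_ne_zero C1 C2 h

/-- for a prime `p`, `t ≥ 2`, and sets `C1, C2 ⊆ F_p^t` with
`⟨v1, v2⟩ ≠ 0` for all `v1 ∈ C1`, `v2 ∈ C2`, one has `|C1| ⋅ |C2| ≤ p^{t+2}`. -/
theorem card_mul_card_le {p t : ℕ} (hp : p.Prime) (ht : 2 ≤ t)
    (C1 C2 : Finset (Fin t → ZMod p))
    (h : ∀ v1 ∈ C1, ∀ v2 ∈ C2, ip v1 v2 ≠ 0) :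
    C1.card * C2.card ≤ p ^ (t + 2) :=
  card_mul_card_le_general hp C1 C2 h
end

section
/- Let p be a prime and t ≥ 2. There exists a collection C of pairs of subsets of F_p^t with |C| ≤ p^{2t(t^{p-1}+p-1)}, such that every pair (C1,C2) ∈ C satisfies |C1|·|C2| ≤ p^{t+2}, and for every pair (A1, A2) of subsets of F_p^t with ⟨v1,v2⟩ ≠ 0 for all v1 ∈ A1, v2 ∈ A2, there exists (C1,C2) ∈ C with A1 ⊆ C1 and A2 ⊆ C2. -/
open Finset Matrix

theorem ip_eq_dotProduct {F ι : Type*} [CommRing F] [Fintype ι] (x y : ι → F) :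
    ip x y = x ⬝ᵥ y :=
  rfl

theorem card_filter_card_le_le_pow (α : Type*) [Fintype α] [DecidableEq α] (M : ℕ) :
    #{S : Finset α | #S ≤ M} ≤ (Fintype.card α + 1) ^ M := by
  have hsurj : Set.SurjOn (fun f : Fin M → Option α => (Finset.univ.image f).eraseNone)
      (Finset.univ : Finset (Fin M → Option α))
      ({S : Finset α | #S ≤ M} : Finset (Finset α)) := by
    intro S hS
    refine ⟨fun i => S.toList[(i : ℕ)]?, Finset.mem_coe.mpr (Finset.mem_univ _),
      Finset.ext fun x => ?_⟩
    rw [Finset.mem_eraseNone, Finset.mem_image, ← Finset.mem_toList, List.mem_iff_getElem?]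
    refine ⟨fun ⟨i, _, hi⟩ => ⟨i, hi⟩, fun ⟨i, hi⟩ => ?_⟩
    obtain ⟨hlt, -⟩ := List.getElem?_eq_some_iff.mp hi
    exact ⟨⟨i, hlt.trans_le (by simpa using hS)⟩, Finset.mem_univ _, hi⟩
  simpa using Finset.card_le_card_of_surjOn _ hsurj

theorem exists_finset_card_le_finrank_span_image_eq {K V W : Type*} [Field K] [DecidableEq V]
    [AddCommGroup W] [Module K W] [FiniteDimensional K W] (g : V → W) (A : Finset V) :
    ∃ S : Finset V, #S ≤ Module.finrank K W ∧
      Submodule.span K (g '' S) = Submodule.span K (g '' A) := by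
  obtain ⟨κ, f, hf, hspan, hli⟩ := exists_linearIndependent' K fun a : A => g a
  have : Finite κ := Finite.of_injective f hf
  have := Fintype.ofFinite κ
  refine ⟨Finset.univ.image fun k => (f k : V), ?_, ?_⟩
  · exact Finset.card_image_le.trans (Finset.card_univ.trans_le hli.fintype_card_le_finrank)
  · convert hspan using 2 <;> ext <;> simp

theorem dotProduct_eq_zero_of_mem_span {R κ : Type*} [CommSemiring R] [Fintype κ]
    {s : Set (κ → R)} {y : κ → R} (h : ∀ x ∈ s, x ⬝ᵥ y = 0) {v : κ → R}
    (hv : v ∈ Submodule.span R s) : v ⬝ᵥ y = 0 := by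
  induction hv using Submodule.span_induction with
  | mem x hx => exact h x hx
  | zero => exact zero_dotProduct y
  | add x z _ _ hx hz => rw [add_dotProduct, hx, hz, add_zero]
  | smul c x _ hx => rw [smul_dotProduct, hx, smul_zero]

def augmentedTensorPow (K ι : Type*) [CommMonoid K] [Fintype K] (v : ι → K) :
    (Fin (Fintype.card K - 1) → ι) ⊕ Fin (Fintype.card K - 1) → K :=
  Sum.elim (fun f => ∏ k, v (f k)) fun _ => 1

section FiniteField

variable {K ι : Type*} [Field K] [Fintype K] [Fintype ι]

theorem augmentedTensorPow_dotProduct (v w : ι → K) :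
    augmentedTensorPow K ι v ⬝ᵥ augmentedTensorPow K ι w =
      (v ⬝ᵥ w) ^ (Fintype.card K - 1) - 1 := by
  have hq : ((Fintype.card K - 1 : ℕ) : K) = -1 := by
    rw [Nat.cast_sub Fintype.card_pos, FiniteField.cast_card_eq_zero, Nat.cast_one, zero_sub]
  simp only [dotProduct, Fintype.sum_sum_type, augmentedTensorPow, Sum.elim_inl, Sum.elim_inr,
    ← Finset.prod_mul_distrib, Fintype.sum_pow, mul_one, Finset.sum_const, Finset.card_univ,
    Fintype.card_fin, nsmul_eq_mul, hq, sub_eq_add_neg]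

theorem augmentedTensorPow_dotProduct_eq_zero_iff (v w : ι → K) :
    augmentedTensorPow K ι v ⬝ᵥ augmentedTensorPow K ι w = 0 ↔ v ⬝ᵥ w ≠ 0 := by
  have hq : Fintype.card K - 1 ≠ 0 := by have := Fintype.one_lt_card (α := K); omega
  rw [augmentedTensorPow_dotProduct, sub_eq_zero]
  refine ⟨fun h h0 => ?_, FiniteField.pow_card_sub_one_eq_one _⟩
  rw [h0, zero_pow hq] at h
  exact zero_ne_one h

variable [DecidableEq K]

variable (K) in
def centeredOrthIndicator (b a : ι → K) : ℤ :=
  Fintype.card K * (if b ⬝ᵥ a = 0 then 1 else 0) - 1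

theorem centeredOrthIndicator_smul {b : ι → K} {c : K} (hc : c ≠ 0) :
    centeredOrthIndicator K (c • b) = centeredOrthIndicator K b := by
  ext a
  simp [centeredOrthIndicator, smul_dotProduct, hc]

variable [DecidableEq ι]

theorem card_filter_dotProduct_eq_zero_mul_pow {κ : Type*} [Fintype κ] {b : κ → ι → K}
    (hb : LinearIndependent K b) :
    #{a : ι → K | ∀ j, b j ⬝ᵥ a = 0} * Fintype.card K ^ Fintype.card κ =
      Fintype.card K ^ Fintype.card ι := by
  classical
  set f := (Matrix.of b).mulVecLin
  have hrange : LinearMap.range f = ⊤ := by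
    apply Submodule.eq_top_of_finrank_eq
    rw [← Matrix.rank, Matrix.rank_eq_finrank_span_row, Module.finrank_fintype_fun_eq_card]
    exact finrank_span_eq_card hb
  have hker : #{a : ι → K | ∀ j, b j ⬝ᵥ a = 0} = Fintype.card (LinearMap.ker f) := by
    rw [← Fintype.card_coe]
    refine Fintype.card_congr (Equiv.subtypeEquivRight fun a => ?_)
    simp [f, funext_iff, Matrix.mulVec, Matrix.of_apply]
  have := f.finrank_range_add_finrank_ker
  rw [hrange, finrank_top, Module.finrank_fintype_fun_eq_card,
    Module.finrank_fintype_fun_eq_card] at this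
  rw [hker, Module.card_eq_pow_finrank (K := K), ← pow_add, ← this, add_comm]

theorem card_filter_dotProduct_eq_zero_mul {b : ι → K} (hb : b ≠ 0) :
    #{a : ι → K | b ⬝ᵥ a = 0} * Fintype.card K = Fintype.card K ^ Fintype.card ι := by
  simpa [Fin.forall_fin_one] using card_filter_dotProduct_eq_zero_mul_pow
    (linearIndependent_unique_iff.mpr hb : LinearIndependent K ![b])

theorem card_filter_dotProduct_eq_zero_and_mul {b b' : ι → K} (h : LinearIndependent K ![b, b']) :
    #{a : ι → K | b ⬝ᵥ a = 0 ∧ b' ⬝ᵥ a = 0} * Fintype.card K ^ 2 =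
      Fintype.card K ^ Fintype.card ι := by
  simpa [Fin.forall_fin_two] using card_filter_dotProduct_eq_zero_mul_pow h

theorem sum_centeredOrthIndicator_mul (b b' : ι → K) :
    ∑ a, centeredOrthIndicator K b a * centeredOrthIndicator K b' a =
      (Fintype.card K : ℤ) ^ 2 * #{a : ι → K | b ⬝ᵥ a = 0 ∧ b' ⬝ᵥ a = 0}
        - Fintype.card K * #{a : ι → K | b ⬝ᵥ a = 0}
        - Fintype.card K * #{a : ι → K | b' ⬝ᵥ a = 0}
        + (Fintype.card K : ℤ) ^ Fintype.card ι := by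
  simp only [centeredOrthIndicator, Finset.card_filter, Nat.cast_sum, Finset.mul_sum]
  have hcard : (Fintype.card K : ℤ) ^ Fintype.card ι = ∑ _a : ι → K, 1 := by simp
  rw [hcard, ← Finset.sum_sub_distrib, ← Finset.sum_sub_distrib, ← Finset.sum_add_distrib]
  refine Finset.sum_congr rfl fun a _ => ?_
  by_cases h : b ⬝ᵥ a = 0 <;> by_cases h' : b' ⬝ᵥ a = 0 <;> simp [h, h'] <;> ring

theorem sum_centeredOrthIndicator_mul_eq_zero {b b' : ι → K} (h : LinearIndependent K ![b, b']) :
    ∑ a, centeredOrthIndicator K b a * centeredOrthIndicator K b' a = 0 := by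
  have h₂ := card_filter_dotProduct_eq_zero_and_mul h
  have h₁ := card_filter_dotProduct_eq_zero_mul (b := b) (by simpa using h.ne_zero 0)
  have h₁' := card_filter_dotProduct_eq_zero_mul (b := b') (by simpa using h.ne_zero 1)
  rw [sum_centeredOrthIndicator_mul]
  zify at h₁ h₁' h₂
  linear_combination h₂ - h₁ - h₁'

theorem sum_centeredOrthIndicator_mul_smul {b : ι → K} (hb : b ≠ 0) {c : K} (hc : c ≠ 0) :
    ∑ a, centeredOrthIndicator K b a * centeredOrthIndicator K (c • b) a =
      (Fintype.card K - 1) * (Fintype.card K : ℤ) ^ Fintype.card ι := by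
  have h₁ := card_filter_dotProduct_eq_zero_mul hb
  rw [centeredOrthIndicator_smul hc, sum_centeredOrthIndicator_mul]
  simp only [and_self]
  zify at h₁
  linear_combination (Fintype.card K - 2 : ℤ) * h₁

theorem sum_sum_centeredOrthIndicator_mul_le {B : Finset (ι → K)} (hB : ∀ b ∈ B, b ≠ 0)
    {b : ι → K} (hb : b ≠ 0) :
    ∑ b' ∈ B, ∑ a, centeredOrthIndicator K b a * centeredOrthIndicator K b' a ≤
      Fintype.card K * ((Fintype.card K - 1) * (Fintype.card K : ℤ) ^ Fintype.card ι) := by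
  classical
  have hprop : ∀ b' ∈ B.filter (∃ c : K, c • b = ·),
      ∑ a, centeredOrthIndicator K b a * centeredOrthIndicator K b' a =
        (Fintype.card K - 1) * (Fintype.card K : ℤ) ^ Fintype.card ι := by
    simp only [Finset.mem_filter]
    rintro _ ⟨hb'B, c, rfl⟩
    exact sum_centeredOrthIndicator_mul_smul hb (left_ne_zero_of_smul (hB _ hb'B))
  have hindep : ∀ b' ∈ B.filter (¬∃ c : K, c • b = ·),
      ∑ a, centeredOrthIndicator K b a * centeredOrthIndicator K b' a = 0 := by
    simp only [Finset.mem_filter, not_exists]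
    exact fun b' ⟨_, hb'⟩ =>
      sum_centeredOrthIndicator_mul_eq_zero ((LinearIndependent.pair_iff' hb).mpr hb')
  have hcard : #(B.filter (∃ c : K, c • b = ·)) ≤ Fintype.card K :=
    calc #(B.filter (∃ c : K, c • b = ·))
        ≤ #(Finset.univ.image (· • b)) :=
          Finset.card_le_card fun b' hb' => by simpa using (Finset.mem_filter.mp hb').2
      _ ≤ Fintype.card K := Finset.card_image_le
  have hq : (1 : ℤ) ≤ Fintype.card K := by exact_mod_cast Fintype.card_pos
  rw [← Finset.sum_filter_add_sum_filter_not B (∃ c : K, c • b = ·), Finset.sum_congr rfl hprop,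
    Finset.sum_congr rfl hindep, Finset.sum_const, Finset.sum_const_zero, add_zero, nsmul_eq_mul]
  gcongr

theorem card_mul_card_le_of_dotProduct_ne_zero_s11 {A B : Finset (ι → K)}
    (h : ∀ a ∈ A, ∀ b ∈ B, a ⬝ᵥ b ≠ 0) :
    #A * #B ≤ Fintype.card K ^ (Fintype.card ι + 2) := by
  obtain rfl | ⟨a₀, ha₀⟩ := A.eq_empty_or_nonempty
  · simp
  obtain rfl | hBne := B.eq_empty_or_nonempty
  · simp
  have hB : ∀ b ∈ B, b ≠ 0 := fun b hb hb0 => h a₀ ha₀ b hb (by simp [hb0])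
  set q : ℤ := (Fintype.card K : ℤ)
  set D : (ι → K) → ℤ := fun a => ∑ b ∈ B, centeredOrthIndicator K b a
  have hDA : ∀ a ∈ A, D a = -#B := fun a ha => by
    have : ∀ b ∈ B, centeredOrthIndicator K b a = -1 := fun b hb => by
      simp [centeredOrthIndicator, dotProduct_comm b a, h a ha b hb]
    simp [D, Finset.sum_congr rfl this]
  have hsumD : ∑ a, D a ^ 2 ≤ #B * (q * ((q - 1) * q ^ Fintype.card ι)) :=
    calc ∑ a, D a ^ 2
        = ∑ b ∈ B, ∑ b' ∈ B, ∑ a, centeredOrthIndicator K b a * centeredOrthIndicator K b' a := by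
          simp only [D, sq, Finset.sum_mul_sum]
          rw [Finset.sum_comm]
          exact Finset.sum_congr rfl fun _ _ => Finset.sum_comm
      _ ≤ ∑ _b ∈ B, q * ((q - 1) * q ^ Fintype.card ι) :=
          Finset.sum_le_sum fun b hb => sum_sum_centeredOrthIndicator_mul_le hB (hB b hb)
      _ = #B * (q * ((q - 1) * q ^ Fintype.card ι)) := by simp
  have hA : (#A : ℤ) * #B ^ 2 ≤ #B * (q * ((q - 1) * q ^ Fintype.card ι)) :=
    calc (#A : ℤ) * #B ^ 2 = ∑ a ∈ A, D a ^ 2 := by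
          simp [Finset.sum_congr rfl fun a ha => congrArg (· ^ 2) (hDA a ha)]
      _ ≤ ∑ a, D a ^ 2 :=
          Finset.sum_le_sum_of_subset_of_nonneg A.subset_univ fun _ _ _ => sq_nonneg _
      _ ≤ _ := hsumD
  have hBpos : (0 : ℤ) < #B := by exact_mod_cast hBne.card_pos
  have hAB : (#A : ℤ) * #B ≤ q * ((q - 1) * q ^ Fintype.card ι) :=
    le_of_mul_le_mul_left (by linear_combination hA) hBpos
  have hqn : 0 ≤ q * q ^ Fintype.card ι := by positivity
  zify
  calc (#A : ℤ) * #B ≤ q * ((q - 1) * q ^ Fintype.card ι) := hAB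
    _ ≤ q ^ (Fintype.card ι + 2) := by rw [pow_add]; linear_combination hqn

open scoped Classical in
noncomputable def orthCover {κ : Type*} (g : (ι → K) → κ → K) (S : Finset (ι → K)) :
    Finset (ι → K) × Finset (ι → K) :=
  let C : Finset (ι → K) := {v | g v ∈ Submodule.span K (g '' S)}
  (C, ({w | ∀ v ∈ C, v ⬝ᵥ w ≠ 0} : Finset (ι → K)))

theorem card_mul_card_orthCover_le {κ : Type*} (g : (ι → K) → κ → K) (S : Finset (ι → K)) :
    #(orthCover g S).1 * #(orthCover g S).2 ≤ Fintype.card K ^ (Fintype.card ι + 2) :=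
  card_mul_card_le_of_dotProduct_ne_zero_s11 fun _ hv _ hw => (Finset.mem_filter.mp hw).2 _ hv

theorem subset_orthCover {κ : Type*} [Fintype κ] {g : (ι → K) → κ → K}
    (hg : ∀ v w, g v ⬝ᵥ g w = 0 ↔ v ⬝ᵥ w ≠ 0) {A₁ A₂ S : Finset (ι → K)}
    (hS : Submodule.span K (g '' S) = Submodule.span K (g '' A₁))
    (h : ∀ v₁ ∈ A₁, ∀ v₂ ∈ A₂, v₁ ⬝ᵥ v₂ ≠ 0) :
    A₁ ⊆ (orthCover g S).1 ∧ A₂ ⊆ (orthCover g S).2 := by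
  simp only [orthCover, Finset.subset_iff, Finset.mem_filter, Finset.mem_univ, true_and, hS]
  refine ⟨fun v hv => Submodule.subset_span ⟨v, hv, rfl⟩, fun w hw v hv => (hg v w).mp ?_⟩
  refine dotProduct_eq_zero_of_mem_span ?_ hv
  rintro _ ⟨a, ha, rfl⟩
  exact (hg a w).mpr (h a ha w hw)

end FiniteField

/-- for a prime `p` and `t ≥ 2`, there is a collection `𝒞` of pairs
of subsets of `F_p^t` with `|𝒞| ≤ p^{2t(t^{p-1}+p-1)}`, such that every
`(C1, C2) ∈ 𝒞` satisfies `|C1| ⋅ |C2| ≤ p^{t+2}`, and every pair `(A1, A2)` of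
subsets with `⟨v1, v2⟩ ≠ 0` for all `v1 ∈ A1`, `v2 ∈ A2` is contained in some
pair of `𝒞`. -/
theorem exists_covering_collection {p t : ℕ} (hp : p.Prime) (ht : 2 ≤ t) :
    ∃ 𝒞 : Finset (Finset (Fin t → ZMod p) × Finset (Fin t → ZMod p)),
      𝒞.card ≤ p ^ (2 * t * (t ^ (p - 1) + p - 1)) ∧
      (∀ C ∈ 𝒞, C.1.card * C.2.card ≤ p ^ (t + 2)) ∧
      (∀ A1 A2 : Finset (Fin t → ZMod p),
        (∀ v1 ∈ A1, ∀ v2 ∈ A2, ip v1 v2 ≠ 0) →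
        ∃ C ∈ 𝒞, A1 ⊆ C.1 ∧ A2 ⊆ C.2) := by
  have := Fact.mk hp
  set g := augmentedTensorPow (ZMod p) (Fin t)
  set M := t ^ (p - 1) + p - 1
  refine ⟨({S | #S ≤ M} : Finset (Finset _)).image (orthCover g), ?_, ?_, fun A₁ A₂ h => ?_⟩
  · have hpt : 2 ≤ p ^ t := hp.two_le.trans (Nat.le_self_pow (by omega) p)
    calc _ ≤ #{S : Finset (Fin t → ZMod p) | #S ≤ M} := Finset.card_image_le
      _ ≤ (p ^ t + 1) ^ M := by simpa using card_filter_card_le_le_pow (Fin t → ZMod p) M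
      _ ≤ (p ^ t * p ^ t) ^ M := Nat.pow_le_pow_left (by nlinarith) M
      _ = p ^ (2 * t * M) := by ring
  · simp only [Finset.mem_image]
    rintro _ ⟨S, -, rfl⟩
    simpa using card_mul_card_orthCover_le g S
  · obtain ⟨S, hcard, hspan⟩ := exists_finset_card_le_finrank_span_image_eq (K := ZMod p) g A₁
    have h' : ∀ v₁ ∈ A₁, ∀ v₂ ∈ A₂, v₁ ⬝ᵥ v₂ ≠ 0 := by simpa only [ip_eq_dotProduct] using h
    refine ⟨orthCover g S, Finset.mem_image_of_mem _ ?_,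
      subset_orthCover augmentedTensorPow_dotProduct_eq_zero_iff hspan h'⟩
    have := hp.one_lt
    simp only [Module.finrank_fintype_fun_eq_card, Fintype.card_sum, Fintype.card_fun, ZMod.card,
      Fintype.card_fin] at hcard
    simp only [Finset.mem_filter, Finset.mem_univ, true_and, M]
    omega
end

section
/- Let t be an integer. There exists a collection C of subsets of F_2^t such that: (1) |C| ≤ 2^{t^2}; (2) every C ∈ C has |C| ≤ 2^{(t+1)/2}; (3) every set A ⊆ F_2^t with ⟨v1,v2⟩ ≠ 0 for all (not necessarily distinct) v1, v2 ∈ A is contained in some member of C. -/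
open Module Submodule Finset

namespace LinearMap.BilinForm

variable {R M : Type*} [CommRing R] [AddCommGroup M] [Module R M] {B : LinearMap.BilinForm R M}

theorem span_le_orthogonal_span {S : Set M} (hS : ∀ x ∈ S, ∀ y ∈ S, B x y = 0) :
    span R S ≤ B.orthogonal (span R S) :=
  span_le.2 fun x hx _ hn =>
    (span_le.2 fun y hy => (hS y hy x hx : B.flip x y = 0) :
      span R S ≤ LinearMap.ker (B.flip x)) hn

theorem apply_sub_sub_eq_zero {A : Set M} {c : R} (hA : ∀ a ∈ A, ∀ b ∈ A, B a b = c)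
    {v a b : M} (hv : v ∈ A) (ha : a ∈ A) (hb : b ∈ A) : B (a - v) (b - v) = 0 := by
  simp only [map_sub, LinearMap.sub_apply, hA _ ha _ hb, hA _ ha _ hv, hA _ hv _ hb,
    hA _ hv _ hv, sub_self]

variable {K V : Type*} [Field K] [AddCommGroup V] [Module K V] [FiniteDimensional K V]

theorem two_mul_finrank_le_of_le_orthogonal {B : LinearMap.BilinForm K V} (hB : B.Nondegenerate)
    {W : Submodule K V} (hW : W ≤ B.orthogonal W) : 2 * finrank K W ≤ finrank K V := by
  have := finrank_mono hW
  rw [finrank_orthogonal hB] at this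
  omega

end LinearMap.BilinForm

theorem Matrix.nondegenerate_dotProductBilin (K n : Type*) [Field K] [Fintype n] :
    (dotProductBilin K K : LinearMap.BilinForm K (n → K)).Nondegenerate :=
  LinearMap.BilinForm.Nondegenerate.ofSeparatingLeft fun v hv => dotProduct_eq_zero v hv

theorem Submodule.exists_fin_le_span_range {K V : Type*} [Field K] [AddCommGroup V] [Module K V]
    {W : Submodule K V} [FiniteDimensional K W] {m : ℕ} (hm : finrank K W ≤ m) :
    ∃ g : Fin m → V, W ≤ span K (Set.range g) := by
  let b := Module.finBasis K W
  let g : Fin m → V := Function.extend (Fin.castLE hm) (fun i => (b i : V)) 0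
  have hb : ∀ i, (b i : V) ∈ span K (Set.range g) := fun i =>
    subset_span ⟨Fin.castLE hm i, (Fin.castLE_injective hm).extend_apply _ _ i⟩
  refine ⟨g, fun x hx => ?_⟩
  have hx' : ∑ i, b.repr ⟨x, hx⟩ i • (b i : V) = x := by
    simpa only [AddSubmonoidClass.coe_finsetSum, Submodule.coe_smul] using
      congrArg Subtype.val (b.sum_repr ⟨x, hx⟩)
  rw [← hx']
  exact sum_mem fun i _ => smul_mem _ _ (hb i)

section SpanCoset

variable (K : Type*) {V : Type*} [Field K] [Fintype K] [AddCommGroup V] [Module K V]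
  [DecidableEq V] {m : ℕ}

def spanCoset (v : V) (g : Fin m → V) : Finset V :=
  univ.image fun c => v + Fintype.linearCombination K g c

theorem card_spanCoset_le (v : V) (g : Fin m → V) :
    #(spanCoset K v g) ≤ Fintype.card K ^ m :=
  card_image_le.trans_eq (by simp)

variable {K}

theorem subset_spanCoset {A : Finset V} {v : V} {g : Fin m → V}
    (hA : ∀ a ∈ A, a - v ∈ span K (Set.range g)) : A ⊆ spanCoset K v g := by
  intro a ha
  obtain ⟨c, hc⟩ := LinearMap.mem_range.1 ((Fintype.range_linearCombination K g).ge (hA a ha))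
  exact mem_image.2 ⟨c, mem_univ c, by rw [hc, add_sub_cancel]⟩

end SpanCoset

theorem exists_subset_spanCoset_of_ip_ne_zero {t : ℕ} (A : Finset (Fin t → ZMod 2))
    (hA : ∀ v1 ∈ A, ∀ v2 ∈ A, ip v1 v2 ≠ 0) :
    ∃ (v : Fin t → ZMod 2) (g : Fin (t / 2) → Fin t → ZMod 2), A ⊆ spanCoset (ZMod 2) v g := by
  rcases A.eq_empty_or_nonempty with rfl | ⟨v, hv⟩
  · exact ⟨0, 0, empty_subset _⟩
  let B : LinearMap.BilinForm (ZMod 2) (Fin t → ZMod 2) := dotProductBilin _ _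
  let W := span (ZMod 2) ((· - v) '' (A : Set (Fin t → ZMod 2)))
  have hW : W ≤ B.orthogonal W := by
    refine LinearMap.BilinForm.span_le_orthogonal_span ?_
    rintro _ ⟨a, ha, rfl⟩ _ ⟨b, hb, rfl⟩
    -- `ip` and `dotProductBilin` agree definitionally.
    exact LinearMap.BilinForm.apply_sub_sub_eq_zero (B := B) (A := A) (c := 1)
      (fun a ha b hb => Fin.eq_one_of_ne_zero _ (hA a ha b hb)) hv ha hb
  have hrank := LinearMap.BilinForm.two_mul_finrank_le_of_le_orthogonal
    (Matrix.nondegenerate_dotProductBilin _ _) hW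
  rw [finrank_fin_fun] at hrank
  obtain ⟨g, hg⟩ := Submodule.exists_fin_le_span_range (K := ZMod 2) (W := W) (m := t / 2)
    (by omega)
  exact ⟨v, g, subset_spanCoset fun a ha => hg (subset_span ⟨a, ha, rfl⟩)⟩

theorem add_mul_half_le_sq (t : ℕ) : t + t * (t / 2) ≤ t ^ 2 := by
  rcases Nat.eq_zero_or_pos t with rfl | ht
  · simp
  · nlinarith [Nat.div_mul_le_self t 2, Nat.div_lt_self ht one_lt_two]

theorem two_pow_half_le_rpow (t : ℕ) : (2 : ℝ) ^ (t / 2) ≤ (2 : ℝ) ^ (((t : ℝ) + 1) / 2) := by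
  rw [← Real.rpow_natCast]
  refine Real.rpow_le_rpow_of_exponent_le one_le_two ?_
  have : ((t / 2 : ℕ) : ℝ) * 2 ≤ t := by exact_mod_cast Nat.div_mul_le_self t 2
  linarith

/-- for every `t`, there is a collection `𝒞` of subsets of `F_2^t`
with `|𝒞| ≤ 2^{t²}`, each member of size at most `2^{(t+1)/2}`, such that every
set `A ⊆ F_2^t` with `⟨v1, v2⟩ ≠ 0` for all (not necessarily distinct)
`v1, v2 ∈ A` is contained in some member of `𝒞`. -/
theorem exists_covering_collection_F2 (t : ℕ) :
    ∃ 𝒞 : Finset (Finset (Fin t → ZMod 2)),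
      𝒞.card ≤ 2 ^ (t ^ 2) ∧
      (∀ C ∈ 𝒞, (C.card : ℝ) ≤ (2 : ℝ) ^ (((t : ℝ) + 1) / 2)) ∧
      (∀ A : Finset (Fin t → ZMod 2),
        (∀ v1 ∈ A, ∀ v2 ∈ A, ip v1 v2 ≠ 0) →
        ∃ C ∈ 𝒞, A ⊆ C) := by
  classical
  let coset (p : (Fin t → ZMod 2) × (Fin (t / 2) → Fin t → ZMod 2)) := spanCoset (ZMod 2) p.1 p.2
  refine ⟨univ.image coset, ?_, ?_, fun A hA => ?_⟩
  · calc #(univ.image coset) ≤ 2 ^ t * (2 ^ t) ^ (t / 2) := card_image_le.trans_eq (by simp)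
      _ ≤ 2 ^ (t ^ 2) := by
        rw [← pow_mul, ← pow_add]
        exact Nat.pow_le_pow_right two_pos (add_mul_half_le_sq t)
  · simp only [mem_image, mem_univ, true_and, forall_exists_index]
    rintro _ ⟨v, g⟩ rfl
    calc (#(spanCoset (ZMod 2) v g) : ℝ) ≤ (2 : ℝ) ^ (t / 2) := by
          exact_mod_cast (card_spanCoset_le (ZMod 2) v g).trans_eq (by simp)
      _ ≤ _ := two_pow_half_le_rpow t
  · obtain ⟨v, g, hAC⟩ := exists_subset_spanCoset_of_ip_ne_zero A hA
    exact ⟨coset (v, g), mem_image_of_mem _ (mem_univ _), hAC⟩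
end

section
/- For every field F and every graph G on n vertices, the clique cover number satisfies χ̄(G)/ξ_F(G) ≤ O(n/log² n), where ξ_F(G) is the minimum dimension of an orthogonal representation of G over F. -/
/-- `G` admits a `d`-dimensional orthogonal representation over `F`: each vertex
gets a non-self-orthogonal vector of `F^d`, with orthogonal vectors assigned to
distinct non-adjacent vertices. -/
def HasOrthRep (F : Type*) [Field F] {V : Type*} (G : SimpleGraph V) (d : ℕ) :
    Prop :=
  ∃ u : V → Fin d → F, (∀ x, ip (u x) (u x) ≠ 0) ∧
    ∀ x y, x ≠ y → ¬G.Adj x y → ip (u x) (u y) = 0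

/-- `ξ_F(G)`: the minimum dimension of an orthogonal representation of `G`
over `F`. -/
noncomputable def xi (F : Type*) [Field F] {V : Type*} (G : SimpleGraph V) : ℕ :=
  sInf {d | HasOrthRep F G d}

/-- The clique cover number `χ̄(G)`: the least number of cliques covering the
vertices of `G`. -/
noncomputable def cliqueCoverNumber {V : Type*} (G : SimpleGraph V) : ℕ :=
  sInf {m | ∃ f : V → Fin m, ∀ x y, f x = f y → x = y ∨ G.Adj x y}


lemma pow_le_three_pow_mul_factorial : ∀ k : ℕ, (k:ℝ)^k ≤ 3^k * (Nat.factorial k) := by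
  intro k
  induction k with
  | zero => simp
  | succ k ih =>
    have hk3 : ((k:ℝ)+1)^k ≤ 3 * (k:ℝ)^k := by
      rcases Nat.eq_zero_or_pos k with h | h
      · subst h; norm_num
      · have hkpos : (0:ℝ) < k := by positivity
        have h1 : (k:ℝ) + 1 ≤ (k:ℝ) * Real.exp (1/k) := by
          have := Real.add_one_le_exp (1/(k:ℝ))
          calc (k:ℝ) + 1 = (k:ℝ) * (1/k + 1) := by field_simp; ring
            _ ≤ (k:ℝ) * Real.exp (1/k) := by nlinarith
        calc ((k:ℝ)+1)^k ≤ ((k:ℝ) * Real.exp (1/k))^k := by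
              apply pow_le_pow_left₀ (by positivity) h1
          _ = (k:ℝ)^k * Real.exp (1/k) ^ k := mul_pow _ _ _
          _ = (k:ℝ)^k * Real.exp (k * (1/k)) := by rw [Real.exp_nat_mul]
          _ = (k:ℝ)^k * Real.exp 1 := by rw [mul_one_div_cancel (ne_of_gt hkpos)]
          _ ≤ 3 * (k:ℝ)^k := by
              have := Real.exp_one_lt_d9
              nlinarith [pow_nonneg (le_of_lt hkpos) k]
    have h0 : (0:ℝ) ≤ (k:ℝ)+1 := by positivity
    push_cast
    calc ((k:ℝ)+1)^(k+1) = ((k:ℝ)+1)^k * ((k:ℝ)+1) := by ring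
      _ ≤ 3 * (k:ℝ)^k * ((k:ℝ)+1) := by nlinarith
      _ ≤ 3 * (3^k * (Nat.factorial k)) * ((k:ℝ)+1) := by
          have : (0:ℝ) ≤ (k:ℝ) + 1 := by positivity
          nlinarith
      _ = 3^(k+1) * ((Nat.factorial k) * ((k:ℝ)+1)) := by ring
      _ = 3^(k+1) * (Nat.factorial (k+1)) := by
          rw [Nat.factorial_succ]; push_cast; ring
  
lemma choose_le_pow3 (s k : ℕ) (hk : 1 ≤ k) :
    (Nat.choose (s + k) k : ℝ) ≤ (3 * (s + k) / k)^k := by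
  have hkR : (0:ℝ) < k := by exact_mod_cast hk
  have h1 : (Nat.choose (s+k) k : ℝ) * (Nat.factorial k) ≤ ((s:ℝ)+k)^k := by
    have := Nat.descFactorial_le_pow (s+k) k
    rw [Nat.descFactorial_eq_factorial_mul_choose] at this
    have := (Nat.cast_le (α := ℝ)).2 this
    push_cast at this ⊢
    linarith [this]
  have h2 := pow_le_three_pow_mul_factorial k
  have hfac : (0:ℝ) < (Nat.factorial k) := by exact_mod_cast Nat.factorial_pos k
  rw [div_pow, le_div_iff₀ (by positivity)]
  calc (Nat.choose (s+k) k : ℝ) * (k:ℝ)^k ≤ (Nat.choose (s+k) k : ℝ) * (3^k * (Nat.factorial k)) := by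
        have : (0:ℝ) ≤ (Nat.choose (s+k) k : ℝ) := by positivity
        nlinarith
    _ = 3^k * ((Nat.choose (s+k) k : ℝ) * (Nat.factorial k)) := by ring
    _ ≤ 3^k * ((s:ℝ)+k)^k := by nlinarith [pow_pos (show (0:ℝ)<3 by norm_num) k]
    _ = (3 * ((s:ℝ) + k))^k := by rw [mul_pow]


open Finset in
lemma ramsey_aux {V : Type*} [DecidableEq V] (G : SimpleGraph V) :
    ∀ (k s b : ℕ), s + b ≤ k → ∀ T : Finset V, Nat.choose (s + b) b ≤ T.card →
      (∃ K ⊆ T, (↑K : Set V).Pairwise G.Adj ∧ K.card = s) ∨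
      (∃ I ⊆ T, (↑I : Set V).Pairwise (fun x y => ¬ G.Adj x y) ∧ I.card = b) := by
  intro k
  induction k with
  | zero =>
    intro s b hsb T hT
    have hs : s = 0 := by omega
    subst hs
    exact Or.inl ⟨∅, by simp, by simp, rfl⟩
  | succ k ih =>
    intro s b hsb T hT
    classical
    rcases Nat.eq_zero_or_pos s with hs | hs
    · subst hs; exact Or.inl ⟨∅, by simp, by simp, rfl⟩
    rcases Nat.eq_zero_or_pos b with hb | hb
    · subst hb; exact Or.inr ⟨∅, by simp, by simp, rfl⟩
    obtain ⟨s', rfl⟩ := Nat.exists_eq_add_of_le hs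
    obtain ⟨b', rfl⟩ := Nat.exists_eq_add_of_le hb
    -- s = 1 + s', b = 1 + b'
    have hTpos : 0 < T.card := lt_of_lt_of_le (Nat.choose_pos (by omega)) hT
    obtain ⟨v, hv⟩ := Finset.card_pos.1 hTpos
    set N : Finset V := T.filter (fun y => G.Adj v y) with hN
    set M : Finset V := (T.erase v).filter (fun y => ¬ G.Adj v y) with hM
    have hNT : N ⊆ T := Finset.filter_subset _ _
    have hMT : M ⊆ T := (Finset.filter_subset _ _).trans (Finset.erase_subset _ _)
    have hcard : N.card + M.card = T.card - 1 := by
      have hNe : N = (T.erase v).filter (fun y => G.Adj v y) := by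
        apply Finset.ext; intro y
        simp only [hN, Finset.mem_filter, Finset.mem_erase]
        constructor
        · rintro ⟨hyT, hadj⟩; exact ⟨⟨fun h => by subst h; exact G.irrefl hadj, hyT⟩, hadj⟩
        · rintro ⟨⟨_, hyT⟩, hadj⟩; exact ⟨hyT, hadj⟩
      rw [hNe, hM, Finset.card_filter_add_card_filter_not, Finset.card_erase_of_mem hv]
    have hchoose : Nat.choose (s' + (1+b')) (1+b') + Nat.choose ((1+s') + b') b'
        ≤ T.card := by
      have h1 : (1+s') + (1+b') = (s' + (1+b')) + 1 := by omega
      have h2 : s' + (1+b') = ((1+s') + b') := by omega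
      calc Nat.choose (s' + (1+b')) (1+b') + Nat.choose ((1+s')+b') b'
          = Nat.choose (s' + (1+b')) (1+b') + Nat.choose (s' + (1+b')) b' := by rw [h2]
        _ = Nat.choose (s' + (1+b') + 1) (b' + 1) := by
              rw [Nat.choose_succ_succ, add_comm 1 b']; exact add_comm _ _
        _ = Nat.choose ((1+s') + (1+b')) (1+b') := by rw [h1, add_comm b' 1]
        _ ≤ T.card := hT
    have hor : Nat.choose (s' + (1+b')) (1+b') ≤ N.card ∨
        Nat.choose ((1+s') + b') b' ≤ M.card := by omega
    rcases hor with hc | hc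
    · rcases ih s' (1+b') (by omega) N hc with ⟨K, hKN, hKcl, hKcard⟩ | hI
      · left
        have hvK : v ∉ K := fun h => G.irrefl ((Finset.mem_filter.1 (hKN h)).2)
        refine ⟨insert v K, ?_, ?_, ?_⟩
        · exact Finset.insert_subset hv (hKN.trans hNT)
        · rw [Finset.coe_insert]
          apply Set.Pairwise.insert hKcl
          intro y hy hne
          have : G.Adj v y := (Finset.mem_filter.1 (hKN hy)).2
          exact ⟨this, this.symm⟩
        · rw [Finset.card_insert_of_notMem hvK, hKcard]; omega
      · right
        obtain ⟨I, hIN, hIind, hIcard⟩ := hI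
        exact ⟨I, hIN.trans hNT, hIind, hIcard⟩
    · rcases ih (1+s') b' (by omega) M hc with hK | ⟨I, hIM, hIind, hIcard⟩
      · left
        obtain ⟨K, hKM, hKcl, hKcard⟩ := hK
        exact ⟨K, hKM.trans hMT, hKcl, hKcard⟩
      · right
        have hvI : v ∉ I := fun h => (Finset.mem_erase.1 (Finset.mem_filter.1 (hIM h)).1).1 rfl
        refine ⟨insert v I, Finset.insert_subset hv (hIM.trans hMT), ?_, ?_⟩
        · rw [Finset.coe_insert]
          apply Set.Pairwise.insert hIind
          intro y hy hne
          have hnadj : ¬ G.Adj v y := (Finset.mem_filter.1 (hIM hy)).2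
          exact ⟨hnadj, fun h => hnadj h.symm⟩
        · rw [Finset.card_insert_of_notMem hvI, hIcard]; omega


lemma greedy_cover {V : Type*} [DecidableEq V] (G : SimpleGraph V) (t M : ℕ) (ht : 1 ≤ t)
    (hyp : ∀ T : Finset V, M ≤ T.card →
      ∃ K ⊆ T, (↑K : Set V).Pairwise G.Adj ∧ K.card = t) :
    ∀ m (S : Finset V), S.card ≤ m → ∃ C : Finset (Finset V),
      (∀ K ∈ C, (↑K : Set V).Pairwise G.Adj) ∧ (∀ x ∈ S, ∃ K ∈ C, x ∈ K) ∧
      C.card ≤ S.card / t + M := by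
  intro m
  induction m with
  | zero =>
    intro S hS
    have : S = ∅ := Finset.card_eq_zero.1 (by omega)
    subst this
    exact ⟨∅, by simp, by simp, by simp⟩
  | succ m ih =>
    intro S hS
    by_cases hSM : S.card < M
    · refine ⟨S.image (fun x => {x}), ?_, ?_, ?_⟩
      · intro K hK
        obtain ⟨x, _, rfl⟩ := Finset.mem_image.1 hK
        simp [Set.pairwise_singleton]
      · intro x hx
        exact ⟨{x}, Finset.mem_image_of_mem _ hx, Finset.mem_singleton_self x⟩
      · calc (S.image (fun x => ({x} : Finset V))).card ≤ S.card := Finset.card_image_le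
          _ ≤ M := hSM.le
          _ ≤ S.card / t + M := Nat.le_add_left M _
    · push_neg at hSM
      obtain ⟨K, hKS, hKcl, hKcard⟩ := hyp S hSM
      have htS : t ≤ S.card := hKcard ▸ Finset.card_le_card hKS
      have hK0 : K.Nonempty := Finset.card_pos.1 (by omega)
      set S' := S \ K with hS'
      have hS'card : S'.card = S.card - t := by
        rw [hS', Finset.card_sdiff_of_subset hKS, hKcard]
      obtain ⟨C', hC'cl, hC'cov, hC'card⟩ := ih S' (by omega)
      refine ⟨insert K C', ?_, ?_, ?_⟩
      · intro K' hK'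
        rcases Finset.mem_insert.1 hK' with rfl | h
        · exact hKcl
        · exact hC'cl K' h
      · intro x hx
        by_cases hxK : x ∈ K
        · exact ⟨K, Finset.mem_insert_self _ _, hxK⟩
        · obtain ⟨K', h1, h2⟩ := hC'cov x (Finset.mem_sdiff.2 ⟨hx, hxK⟩)
          exact ⟨K', Finset.mem_insert_of_mem h1, h2⟩
      · calc (insert K C').card ≤ C'.card + 1 := Finset.card_insert_le _ _
          _ ≤ (S.card - t) / t + 1 + M := by rw [hS'card] at hC'card; omega
          _ = ((S.card - t) + t) / t + M := by rw [Nat.add_div_right _ (show 0 < t by omega)]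
          _ = S.card / t + M := by rw [Nat.sub_add_cancel htS]

lemma cliqueCoverNumber_le_of_cover {V : Type*} [Fintype V] [DecidableEq V]
    (G : SimpleGraph V) (C : Finset (Finset V))
    (hcl : ∀ K ∈ C, (↑K : Set V).Pairwise G.Adj)
    (hcov : ∀ x : V, ∃ K ∈ C, x ∈ K) :
    cliqueCoverNumber G ≤ C.card := by
  apply Nat.sInf_le
  have e : ↥C ≃ Fin C.card := (Fintype.equivFin ↥C).trans (finCongr (Fintype.card_coe C))
  choose Kf hKf hxKf using hcov
  refine ⟨fun x => e ⟨Kf x, hKf x⟩, ?_⟩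
  intro x y hxy
  by_cases hne : x = y
  · exact Or.inl hne
  · right
    have : Kf x = Kf y := by
      have := e.injective hxy
      exact Subtype.ext_iff.1 this
    have hx : x ∈ (↑(Kf x) : Set V) := hxKf x
    have hy : y ∈ (↑(Kf x) : Set V) := by rw [this]; exact hxKf y
    exact hcl (Kf x) (hKf x) hx hy hne

lemma cliqueCoverNumber_le_card {n : ℕ} (G : SimpleGraph (Fin n)) :
    cliqueCoverNumber G ≤ n := by
  apply Nat.sInf_le
  exact ⟨id, fun x y h => Or.inl h⟩


lemma ip_sum_left {F : Type*} [CommRing F] {ι κ : Type*} [Fintype ι] [Fintype κ]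
    (v : κ → ι → F) (c : κ → F) (w : ι → F) :
    ip (∑ k, c k • v k) w = ∑ k, c k * ip (v k) w := by
  simp only [ip, Finset.sum_apply, Pi.smul_apply, smul_eq_mul, Finset.sum_mul,
    Finset.mul_sum]
  rw [Finset.sum_comm]
  apply Finset.sum_congr rfl
  intro k _
  apply Finset.sum_congr rfl
  intro i _
  ring

lemma indep_card_le_of_orthrep {F : Type*} [Field F] {n d : ℕ} {G : SimpleGraph (Fin n)}
    (h : HasOrthRep F G d) (I : Finset (Fin n))
    (hind : (↑I : Set (Fin n)).Pairwise (fun x y => ¬G.Adj x y)) : I.card ≤ d := by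
  obtain ⟨u, hself, horth⟩ := h
  have hli : LinearIndependent F (fun i : ↥I => u ↑i) := by
    rw [Fintype.linearIndependent_iff]
    intro g hsum y
    have key : ∑ i : ↥I, g i * ip (u ↑i) (u ↑y) = 0 := by
      rw [← ip_sum_left (fun i : ↥I => u ↑i) g (u ↑y), hsum]
      simp [ip]
    rw [Finset.sum_eq_single y] at key
    · rcases mul_eq_zero.1 key with h | h
      · exact h
      · exact absurd h (hself ↑y)
    · intro i _ hiy
      have hne : (↑i : Fin n) ≠ ↑y := fun hc => hiy (Subtype.ext hc)
      rw [horth _ _ hne (hind i.2 y.2 hne)]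
      ring
    · intro hy
      exact absurd (Finset.mem_univ y) hy
  have := hli.fintype_card_le_finrank
  rwa [Module.finrank_fin_fun, Fintype.card_coe] at this


-- log bounds
lemma log_le_two_sqrt {x : ℝ} (hx : 0 < x) : Real.log x ≤ 2 * Real.sqrt x := by
  have h1 : Real.log (Real.sqrt x) ≤ Real.sqrt x - 1 :=
    Real.log_le_sub_one_of_pos (Real.sqrt_pos.2 hx)
  rw [Real.log_sqrt hx.le] at h1
  linarith
lemma logb_sq_le {x : ℝ} (hx : 1 ≤ x) : (Real.logb 2 x)^2 ≤ 36 * Real.sqrt x := by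
  have hx0 : 0 < x := by linarith
  have hs0 : 0 < Real.sqrt x := Real.sqrt_pos.2 hx0
  have hss0 : 0 < Real.sqrt (Real.sqrt x) := Real.sqrt_pos.2 hs0
  have h1 : Real.log x = 4 * Real.log (Real.sqrt (Real.sqrt x)) := by
    rw [Real.log_sqrt hs0.le, Real.log_sqrt hx0.le]; ring
  have h2 : Real.log (Real.sqrt (Real.sqrt x)) ≤ Real.sqrt (Real.sqrt x) :=
    (Real.log_le_sub_one_of_pos hss0).trans (by linarith)
  have h3 : 0 ≤ Real.log x := Real.log_nonneg hx
  have h4 : (Real.sqrt (Real.sqrt x))^2 = Real.sqrt x := Real.sq_sqrt hs0.le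
  have h5 : (Real.log x)^2 ≤ 16 * Real.sqrt x := by
    have : Real.log x ≤ 4 * Real.sqrt (Real.sqrt x) := by linarith
    nlinarith
  have hl2 := Real.log_two_gt_d9
  rw [Real.logb, div_pow]
  rw [div_le_iff₀ (by positivity)]
  nlinarith [sq_nonneg (Real.log 2 - 0.6931471803), hs0.le, h5, mul_nonneg hs0.le (sq_nonneg (Real.log 2))]

lemma pow_key {L : ℝ} {n : ℕ} (hn : 2 ≤ n) (hL : L = Real.logb 2 n) (hL1 : 1 ≤ L)
    (s k : ℕ) (hk : 1 ≤ k) (h : 3*((s:ℝ)+k)*(k:ℝ) ≤ 36*L^2/2048) :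
    (3*((s:ℝ)+(k:ℝ))/(k:ℝ))^k ≤ Real.sqrt n := by
  have hk0 : (0:ℝ) < k := by exact_mod_cast hk
  have hs0 : (0:ℝ) ≤ s := Nat.cast_nonneg s
  set X : ℝ := 3*((s:ℝ)+(k:ℝ))/(k:ℝ) with hX
  have hX0 : 0 < X := by positivity
  have hn0 : (0:ℝ) < n := by positivity
  have hsn : 0 < Real.sqrt n := Real.sqrt_pos.2 hn0
  -- suffices to compare logs
  rw [← Real.log_le_log_iff (by positivity) hsn]
  rw [Real.log_pow]
  have h1 : Real.log X ≤ 2 * Real.sqrt X := log_le_two_sqrt hX0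
  have h2 : (k:ℝ) * (2 * Real.sqrt X) = 2 * Real.sqrt ((k:ℝ)^2 * X) := by
    rw [Real.sqrt_mul (sq_nonneg _), Real.sqrt_sq hk0.le]; ring
  have h3 : (k:ℝ)^2 * X = 3*((s:ℝ)+k)*k := by
    rw [hX]; field_simp
  have h4 : Real.sqrt ((k:ℝ)^2 * X) ≤ Real.sqrt (36*L^2/2048) := by
    apply Real.sqrt_le_sqrt; rw [h3]; exact h
  have h5 : Real.sqrt (36*L^2/2048) ≤ Real.log 2 / 4 * L := by
    have hl2 := Real.log_two_gt_d9
    have hc : (0:ℝ) ≤ Real.log 2 / 4 * L := by nlinarith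
    rw [show Real.log 2 / 4 * L = Real.sqrt ((Real.log 2 / 4 * L)^2) from (Real.sqrt_sq hc).symm]
    apply Real.sqrt_le_sqrt
    nlinarith [sq_nonneg (Real.log 2 - 0.6931471803), sq_nonneg L, hL1]
  have h6 : Real.log (Real.sqrt n) = Real.log 2 / 2 * L := by
    rw [Real.log_sqrt hn0.le, hL, Real.logb]
    have : Real.log 2 ≠ 0 := ne_of_gt (Real.log_pos (by norm_num))
    field_simp
  have hXk : (k:ℝ) * Real.log X ≤ 2 * Real.sqrt ((k:ℝ)^2 * X) := by
    rw [← h2]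
    have : 0 ≤ Real.log X ∨ Real.log X < 0 := le_or_gt 0 (Real.log X)
    nlinarith [Real.sqrt_nonneg X]
  calc (k:ℝ) * Real.log X ≤ 2 * Real.sqrt ((k:ℝ)^2 * X) := hXk
    _ ≤ 2 * Real.sqrt (36*L^2/2048) := by linarith
    _ ≤ 2 * (Real.log 2 / 4 * L) := by linarith
    _ = Real.log 2 / 2 * L := by ring
    _ = Real.log (Real.sqrt n) := h6.symm


set_option maxHeartbeats 1000000 in
lemma erdos_cover {n : ℕ} (hn : 2 ≤ n) (G : SimpleGraph (Fin n)) (a : ℕ) (ha : 1 ≤ a)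
    (hind : ∀ I : Finset (Fin n),
      (↑I : Set (Fin n)).Pairwise (fun x y => ¬G.Adj x y) → I.card ≤ a) :
    (cliqueCoverNumber G : ℝ) ≤ 2048 * a * n / (Real.logb 2 n)^2 := by
  classical
  set L : ℝ := Real.logb 2 n with hLdef
  have hn0 : (0:ℝ) < n := by positivity
  have hn2 : (2:ℝ) ≤ n := by exact_mod_cast hn
  have hL1 : 1 ≤ L := by
    rw [hLdef, show (1:ℝ) = Real.logb 2 2 by rw [Real.logb_self_eq_one] <;> norm_num]
    exact Real.logb_le_logb_of_le (by norm_num) (by norm_num) hn2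
  have hL0 : (0:ℝ) < L := by linarith
  have haR : (1:ℝ) ≤ a := by exact_mod_cast ha
  have hsq1 : (1:ℝ) ≤ Real.sqrt n := by
    rw [show (1:ℝ) = Real.sqrt 1 from (Real.sqrt_one).symm]
    exact Real.sqrt_le_sqrt (by linarith)
  have hchi_n := cliqueCoverNumber_le_card G
  by_cases hcase : L^2 ≤ 2048 * a
  · -- trivial regime
    have h1 : (cliqueCoverNumber G : ℝ) ≤ n := by exact_mod_cast hchi_n
    rw [le_div_iff₀ (by positivity)]
    nlinarith
  · push_neg at hcase
    have haL : (a:ℝ) < L^2 / 2048 := by linarith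
    set T : ℕ := ⌈2 * L^2 / (2048 * a)⌉₊ with hTdef
    have hTlb : 2*L^2/(2048*a) ≤ (T:ℝ) := Nat.le_ceil _
    have hT2 : (2:ℝ) < 2*L^2/(2048*a) := by
      rw [lt_div_iff₀ (by positivity)]; nlinarith
    have hT1 : 1 ≤ T := by
      have : (1:ℝ) < T := by linarith
      exact_mod_cast this.le
    have hT0 : (0:ℝ) < T := by
      have : (2:ℝ) < T := lt_of_lt_of_le hT2 hTlb
      linarith
    have hTub : (T:ℝ) ≤ 2*L^2/(2048*a) + 1 := (Nat.ceil_lt_add_one (by positivity)).le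
    have hTb6 : (T:ℝ) * ((a:ℝ)+1) ≤ 6*L^2/2048 := by
      have h1 : 2*L^2/(2048*a) * a = 2*L^2/2048 := by field_simp
      have h2 : 2*L^2/(2048*a) ≤ 2*L^2/2048 := by
        apply div_le_div_of_nonneg_left (by positivity) (by positivity)
        nlinarith
      have h3 : (T:ℝ)*((a:ℝ)+1) = (T:ℝ)*a + T := by ring
      have h4 : (T:ℝ)*a ≤ 2*L^2/2048 + a := by
        calc (T:ℝ)*a ≤ (2*L^2/(2048*a) + 1)*a := by nlinarith
          _ = 2*L^2/2048 + a := by rw [← h1]; ring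
      nlinarith
    -- binomial bound
    have hbin : (Nat.choose (T + (a+1)) (a+1) : ℝ) ≤ Real.sqrt n := by
      have hb1R : (0:ℝ) < (a:ℝ)+1 := by positivity
      by_cases hTb : T ≤ a + 1
      · have hsymm : Nat.choose (T + (a+1)) (a+1) = Nat.choose ((a+1) + T) T := by
          rw [add_comm T (a+1)]; exact Nat.choose_symm_add
        rw [hsymm]
        refine le_trans (choose_le_pow3 (a+1) T hT1) ?_
        apply pow_key hn hLdef hL1 (a+1) T hT1
        have hTbR : (T:ℝ) ≤ (a:ℝ)+1 := by exact_mod_cast hTb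
        have hq : (0:ℝ) ≤ (T:ℝ) * (((a:ℝ)+1) - T) :=
          mul_nonneg hT0.le (by linarith)
        push_cast
        nlinarith [hTb6, hq]
      · push_neg at hTb
        have hbT : (a:ℝ)+1 ≤ T := by exact_mod_cast hTb.le
        refine le_trans (choose_le_pow3 T (a+1) (by omega)) ?_
        apply pow_key hn hLdef hL1 T (a+1) (by omega)
        have hq : (0:ℝ) ≤ (((a:ℝ)+1)) * ((T:ℝ) - ((a:ℝ)+1)) :=
          mul_nonneg hb1R.le (by linarith)
        push_cast
        nlinarith [hTb6, hq]
    set M : ℕ := ⌈Real.sqrt n⌉₊ with hMdef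
    have hbinM : Nat.choose (T + (a+1)) (a+1) ≤ M := by
      have h1 : (Nat.choose (T + (a+1)) (a+1) : ℝ) ≤ (M:ℝ) := hbin.trans (Nat.le_ceil _)
      exact_mod_cast h1
    have hyp : ∀ S : Finset (Fin n), M ≤ S.card →
        ∃ K ⊆ S, (↑K : Set (Fin n)).Pairwise G.Adj ∧ K.card = T := by
      intro S hS
      rcases ramsey_aux G (T + (a+1)) T (a+1) le_rfl S (le_trans hbinM hS) with h | h
      · exact h
      · obtain ⟨I, _, hIind, hIcard⟩ := h
        have := hind I hIind
        omega
    obtain ⟨C, hCcl, hCcov, hCcard⟩ :=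
      greedy_cover G T M hT1 hyp n Finset.univ (by simp)
    have hcovern : cliqueCoverNumber G ≤ n / T + M := by
      refine le_trans (cliqueCoverNumber_le_of_cover G C hCcl ?_) ?_
      · intro x; exact hCcov x (Finset.mem_univ x)
      · simpa using hCcard
    -- real arithmetic finish
    have hchiR : (cliqueCoverNumber G : ℝ) ≤ (n:ℝ)/T + (Real.sqrt n + 1) := by
      have h1 : (cliqueCoverNumber G : ℝ) ≤ ((n / T + M : ℕ) : ℝ) := by exact_mod_cast hcovern
      have h2 : ((n / T : ℕ) : ℝ) ≤ (n:ℝ)/T := Nat.cast_div_le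
      have h3 : (M:ℝ) < Real.sqrt n + 1 := Nat.ceil_lt_add_one (Real.sqrt_nonneg _)
      push_cast at h1
      linarith
    have hdivT : (n:ℝ)/T ≤ (n:ℝ) * (2048*a) / (2*L^2) := by
      have h1 : (n:ℝ)/T ≤ (n:ℝ)/(2*L^2/(2048*a)) := by
        apply div_le_div_of_nonneg_left hn0.le (by positivity) hTlb
      calc (n:ℝ)/T ≤ (n:ℝ)/(2*L^2/(2048*a)) := h1
        _ = (n:ℝ) * (2048*a) / (2*L^2) := by field_simp
    have hsplit : 2048*(a:ℝ)*n/L^2 = (n:ℝ)*(2048*a)/(2*L^2) + (n:ℝ)*(2048*a)/(2*L^2) := by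
      field_simp; ring
    have h36 : L^2 ≤ 36 * Real.sqrt n := logb_sq_le (by linarith)
    have hlast : Real.sqrt n + 1 ≤ (n:ℝ)*(2048*a)/(2*L^2) := by
      rw [le_div_iff₀ (by positivity)]
      have hnss : (n:ℝ) = Real.sqrt n * Real.sqrt n := (Real.mul_self_sqrt hn0.le).symm
      nlinarith [Real.sqrt_nonneg (n:ℝ), sq_nonneg (Real.sqrt n)]
    linarith

lemma hasOrthRep_self (F : Type*) [Field F] {n : ℕ} (G : SimpleGraph (Fin n)) :
    HasOrthRep F G n := by
  classical
  refine ⟨fun x => fun i => if x = i then 1 else 0, ?_, ?_⟩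
  · intro x
    have : (ip (fun i => if x = i then (1:F) else 0) (fun i => if x = i then 1 else 0)) = 1 := by
      unfold ip
      rw [Finset.sum_eq_single x]
      · simp
      · intro i _ hix; simp [Ne.symm hix]
      · intro h; exact absurd (Finset.mem_univ x) h
    rw [this]; exact one_ne_zero
  · intro x y hxy _
    unfold ip
    apply Finset.sum_eq_zero
    intro i _
    by_cases hx : x = i
    · subst hx; simp [fun h => hxy (h : y = x).symm, Ne.symm hxy]
    · simp [hx]

lemma xi_mem (F : Type*) [Field F] {n : ℕ} (G : SimpleGraph (Fin n)) :
    HasOrthRep F G (xi F G) := by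
  have h : n ∈ {d | HasOrthRep F G d} := hasOrthRep_self F G
  exact Nat.sInf_mem ⟨n, h⟩

lemma xi_pos (F : Type*) [Field F] {n : ℕ} (hn : 1 ≤ n) (G : SimpleGraph (Fin n)) :
    1 ≤ xi F G := by
  rcases Nat.eq_zero_or_pos (xi F G) with h0 | h
  · exfalso
    obtain ⟨u, hself, -⟩ := xi_mem F G
    haveI : IsEmpty (Fin (xi F G)) := by rw [h0]; infer_instance
    apply hself ⟨0, by omega⟩
    unfold ip
    rw [Finset.univ_eq_empty, Finset.sum_empty]
  · exact h

/-- for every field `F` and graph `G` on `n` vertices,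
`χ̄(G)/ξ_F(G) ≤ O(n / log² n)` (logarithms in base 2). -/
theorem cliqueCover_div_xi_le :
    ∃ c : ℝ, 0 < c ∧ ∀ (F : Type) [Field F], ∀ n : ℕ, 2 ≤ n →
      ∀ G : SimpleGraph (Fin n),
        (cliqueCoverNumber G : ℝ) / (xi F G : ℝ) ≤
          c * n / (Real.logb 2 n) ^ 2 := by
  refine ⟨2048, by norm_num, ?_⟩
  intro F _ n hn G
  set d : ℕ := xi F G with hd
  have hd1 : 1 ≤ d := xi_pos F (by omega) G
  have hdR : (0:ℝ) < d := by exact_mod_cast hd1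
  have hind : ∀ I : Finset (Fin n),
      (↑I : Set (Fin n)).Pairwise (fun x y => ¬G.Adj x y) → I.card ≤ d :=
    fun I hI => indep_card_le_of_orthrep (xi_mem F G) I hI
  have herd := erdos_cover hn G d hd1 hind
  have hL0 : (0:ℝ) < Real.logb 2 n := by
    have h2 : (2:ℝ) ≤ n := by exact_mod_cast hn
    have h1 : (1:ℝ) ≤ Real.logb 2 n := by
      rw [show (1:ℝ) = Real.logb 2 2 by rw [Real.logb_self_eq_one] <;> norm_num]
      exact Real.logb_le_logb_of_le (by norm_num) (by norm_num) h2
    linarith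
  rw [div_le_iff₀ hdR]
  calc (cliqueCoverNumber G : ℝ) ≤ 2048 * d * n / (Real.logb 2 n)^2 := herd
    _ = 2048 * n / (Real.logb 2 n)^2 * d := by ring
end
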